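/- Let (Ω, ℙ) be a probability space, σ : Ω → Ω an ergodic measure-preserving transformation, φ ∈ L¹(ℙ) a nonnegative function, and (Λ_N) a sequence of positive reals with Λ_N → ∞. Then for ℙ-almost every ω, (1/N) · Σ_{n=0}^{N-1} φ(σⁿω) · 1_{φ(σⁿω) > Λ_N} → 0 as N → ∞. -/

import Mathlib

/-!
For the tails `ψ_M = φ · 1_{φ > M}`, the maximal ergodic inequality gives
`ℙ(∃ n, S_n ψ_M > ε n) ≤ 𝔼 ψ_M / ε`, and `𝔼 ψ_M → 0` by dominated convergence. Hence almost
surely, for every `ε > 0` some `M` has `S_n ψ_M ≤ ε n` for all `n`. Since `Λ_N ≥ M` eventually,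
the `N`-th truncated average is then at most `S_N ψ_M / N ≤ ε`.
-/

open MeasureTheory Filter Topology

section BirkhoffMax

variable {α : Type*} {f : α → α} {g : α → ℝ}

noncomputable def birkhoffMax (f : α → α) (g : α → ℝ) : ℕ → α → ℝ
  | 0 => 0
  | N + 1 => fun x => max (birkhoffMax f g N x) (birkhoffSum f g (N + 1) x)

lemma birkhoffMax_nonneg : ∀ N x, 0 ≤ birkhoffMax f g N x
  | 0, _ => le_rfl
  | N + 1, x => (birkhoffMax_nonneg N x).trans (le_max_left _ _)

lemma monotone_birkhoffMax (x : α) : Monotone fun N => birkhoffMax f g N x :=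
  monotone_nat_of_le_succ fun _ => le_max_left _ _

lemma birkhoffSum_le_birkhoffMax {n N : ℕ} (h : n ≤ N) (x : α) :
    birkhoffSum f g n x ≤ birkhoffMax f g N x := by
  refine (?_ : birkhoffSum f g n x ≤ birkhoffMax f g n x).trans (monotone_birkhoffMax x h)
  cases n with
  | zero => exact (birkhoffSum_zero f g x).trans_le (birkhoffMax_nonneg 0 x)
  | succ n => exact le_max_right _ _

lemma birkhoffMax_le {N : ℕ} {x : α} {c : ℝ} (hc : 0 ≤ c)
    (h : ∀ n ≤ N, birkhoffSum f g n x ≤ c) : birkhoffMax f g N x ≤ c := by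
  induction N with
  | zero => exact hc
  | succ N ih => exact max_le (ih fun n hn => h n (hn.trans N.le_succ)) (h (N + 1) le_rfl)

/-- From `S_{n+1} g x = g x + S_n g (f x)`. -/
lemma birkhoffMax_succ_le (N : ℕ) (x : α) :
    birkhoffMax f g (N + 1) x ≤ max 0 (g x + birkhoffMax f g N (f x)) := by
  refine birkhoffMax_le (le_max_left _ _) fun n hn => ?_
  cases n with
  | zero => exact (birkhoffSum_zero f g x).trans_le (le_max_left _ _)
  | succ n =>
    rw [birkhoffSum_succ']
    exact le_max_of_le_right (add_le_add le_rfl (birkhoffSum_le_birkhoffMax (by omega) _))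

lemma birkhoffMax_sub_birkhoffMax_comp_le_indicator (N : ℕ) (x : α) :
    birkhoffMax f g N x - birkhoffMax f g N (f x)
      ≤ {y | 0 < birkhoffMax f g (N + 1) y}.indicator g x := by
  have hmono := monotone_birkhoffMax (f := f) (g := g) x N.le_succ
  have hfx := birkhoffMax_nonneg (f := f) (g := g) N (f x)
  by_cases hx : 0 < birkhoffMax f g (N + 1) x
  · have hsucc : birkhoffMax f g (N + 1) x ≤ g x + birkhoffMax f g N (f x) :=
      (le_max_iff.1 (birkhoffMax_succ_le N x)).resolve_left hx.not_ge
    rw [Set.indicator_of_mem (s := {y | 0 < birkhoffMax f g (N + 1) y}) hx]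
    linarith
  · rw [Set.indicator_of_notMem (s := {y | 0 < birkhoffMax f g (N + 1) y}) hx]
    linarith

lemma birkhoffSum_sub_const (ψ : α → ℝ) (c : ℝ) (n : ℕ) (x : α) :
    birkhoffSum f (fun y => ψ y - c) n x = birkhoffSum f ψ n x - n * c := by
  simp [birkhoffSum, Finset.sum_sub_distrib]

variable [MeasurableSpace α] {μ : Measure α}

lemma measurable_birkhoffSum (hf : Measurable f) (hg : Measurable g) (n : ℕ) :
    Measurable (birkhoffSum f g n) :=
  Finset.measurable_sum _ fun k _ => hg.comp (hf.iterate k)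

lemma measurable_birkhoffMax (hf : Measurable f) (hg : Measurable g) :
    ∀ N, Measurable (birkhoffMax f g N)
  | 0 => measurable_const
  | N + 1 => (measurable_birkhoffMax hf hg N).max (measurable_birkhoffSum hf hg (N + 1))

lemma integrable_birkhoffSum (hf : MeasurePreserving f μ μ) (hg : Integrable g μ) (n : ℕ) :
    Integrable (birkhoffSum f g n) μ :=
  integrable_finsetSum _ fun k _ => ((hf.iterate k).integrable_comp hg.1).2 hg

lemma integrable_birkhoffMax (hf : MeasurePreserving f μ μ) (hg : Integrable g μ) :
    ∀ N, Integrable (birkhoffMax f g N) μ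
  | 0 => integrable_zero _ _ _
  | N + 1 => (integrable_birkhoffMax hf hg N).sup (integrable_birkhoffSum hf hg (N + 1))

/-- Garsia's maximal ergodic lemma. -/
lemma setIntegral_birkhoffMax_pos_nonneg (hf : MeasurePreserving f μ μ) (hgm : Measurable g)
    (hg : Integrable g μ) (N : ℕ) :
    0 ≤ ∫ x in {x | 0 < birkhoffMax f g (N + 1) x}, g x ∂μ := by
  have hM := integrable_birkhoffMax hf hg N
  have hMf : Integrable (fun x => birkhoffMax f g N (f x)) μ := (hf.integrable_comp hM.1).2 hM
  have hA : MeasurableSet {x | 0 < birkhoffMax f g (N + 1) x} :=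
    measurableSet_lt measurable_const (measurable_birkhoffMax hf.measurable hgm (N + 1))
  rw [← integral_indicator hA]
  calc (0 : ℝ) = ∫ x, (birkhoffMax f g N x - birkhoffMax f g N (f x)) ∂μ := by
        rw [integral_sub hM hMf, ← integral_map hf.measurable.aemeasurable
          (measurable_birkhoffMax hf.measurable hgm N).aestronglyMeasurable, hf.map_eq, sub_self]
    _ ≤ _ := integral_mono (hM.sub hMf) (hg.indicator hA)
          (birkhoffMax_sub_birkhoffMax_comp_le_indicator N)

/-- The maximal ergodic inequality, obtained from Garsia's lemma applied to `ψ - ε`. -/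
lemma measure_exists_birkhoffSum_gt_le [IsFiniteMeasure μ] (hf : MeasurePreserving f μ μ)
    {ψ : α → ℝ} (hψm : Measurable ψ) (hψ : Integrable ψ μ) (hψ0 : 0 ≤ᵐ[μ] ψ) {ε : ℝ}
    (hε : 0 < ε) :
    μ {x | ∃ n : ℕ, ε * n < birkhoffSum f ψ n x} ≤ ENNReal.ofReal ((∫ x, ψ x ∂μ) / ε) := by
  set A : ℕ → Set α := fun N => {x | 0 < birkhoffMax f (fun y => ψ y - ε) (N + 1) x}
  have hsub : {x | ∃ n : ℕ, ε * n < birkhoffSum f ψ n x} ⊆ ⋃ N, A N := by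
    rintro x ⟨n, hn⟩
    refine Set.mem_iUnion.2 ⟨n, ?_⟩
    refine lt_of_lt_of_le ?_ (birkhoffSum_le_birkhoffMax n.le_succ x)
    rw [birkhoffSum_sub_const]
    linarith
  have hA : ∀ N, μ (A N) ≤ ENNReal.ofReal ((∫ x, ψ x ∂μ) / ε) := by
    intro N
    have hgarsia := setIntegral_birkhoffMax_pos_nonneg (g := fun y => ψ y - ε) hf
      (hψm.sub measurable_const) (hψ.sub (integrable_const ε)) N
    rw [integral_sub hψ.integrableOn (integrable_const ε).integrableOn, setIntegral_const,
      smul_eq_mul] at hgarsia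
    have hle : ∫ x in A N, ψ x ∂μ ≤ ∫ x, ψ x ∂μ := setIntegral_le_integral hψ hψ0
    rw [← ofReal_measureReal]
    exact ENNReal.ofReal_le_ofReal ((le_div_iff₀ hε).2 (by linarith))
  have hmono : Monotone A := fun M N h x hx =>
    hx.trans_le (monotone_birkhoffMax x (Nat.succ_le_succ h))
  calc μ {x | ∃ n : ℕ, ε * n < birkhoffSum f ψ n x} ≤ μ (⋃ N, A N) := measure_mono hsub
    _ = ⨆ N, μ (A N) := hmono.measure_iUnion
    _ ≤ _ := iSup_le hA

end BirkhoffMax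

section TailPart

variable {α : Type*} {g : α → ℝ} {s t : ℝ} {x : α}

noncomputable def tailPart (g : α → ℝ) (t : ℝ) (x : α) : ℝ := if t < g x then g x else 0

lemma tailPart_nonneg (ht : 0 ≤ t) : 0 ≤ tailPart g t x := by
  unfold tailPart
  split_ifs with h
  · exact ht.trans h.le
  · exact le_rfl

lemma tailPart_le_tailPart (hs : 0 ≤ s) (hst : s ≤ t) : tailPart g t x ≤ tailPart g s x := by
  unfold tailPart
  split_ifs with ht hs' hs'
  · exact le_rfl
  · exact absurd (hst.trans_lt ht) hs'
  · exact hs.trans hs'.le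
  · exact le_rfl

lemma norm_tailPart_le : ‖tailPart g t x‖ ≤ ‖g x‖ := by
  unfold tailPart
  split_ifs
  · exact le_rfl
  · simp

variable [MeasurableSpace α] {μ : Measure α}

lemma measurable_tailPart (hg : Measurable g) (t : ℝ) : Measurable (tailPart g t) :=
  Measurable.ite (measurableSet_lt measurable_const hg) hg measurable_const

lemma integrable_tailPart (hgm : Measurable g) (hg : Integrable g μ) (t : ℝ) :
    Integrable (tailPart g t) μ :=
  hg.mono (measurable_tailPart hgm t).aestronglyMeasurable (ae_of_all _ fun _ => norm_tailPart_le)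

lemma tendsto_integral_tailPart (hgm : Measurable g) (hg : Integrable g μ) :
    Tendsto (fun M : ℕ => ∫ x, tailPart g M x ∂μ) atTop (𝓝 0) := by
  have hlim : ∀ x, Tendsto (fun M : ℕ => tailPart g M x) atTop (𝓝 0) := fun x =>
    tendsto_const_nhds.congr' <| (tendsto_natCast_atTop_atTop.eventually_gt_atTop (g x)).mono
      fun M hM => (if_neg hM.not_gt).symm
  simpa using tendsto_integral_of_dominated_convergence (fun x => ‖g x‖)
    (fun M => (measurable_tailPart hgm M).aestronglyMeasurable) hg.norm
    (fun _ => ae_of_all _ fun _ => norm_tailPart_le) (ae_of_all _ hlim)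

end TailPart

section SmallTails

variable {α : Type*} [MeasurableSpace α] {μ : Measure α} [IsFiniteMeasure μ] {f : α → α}
  {g : α → ℝ}

lemma ae_exists_birkhoffSum_tailPart_le (hf : MeasurePreserving f μ μ) (hgm : Measurable g)
    (hg : Integrable g μ) {ε : ℝ} (hε : 0 < ε) :
    ∀ᵐ x ∂μ, ∃ M : ℕ, ∀ n, birkhoffSum f (tailPart g M) n x ≤ ε * n := by
  set bad : Set α := ⋂ M : ℕ, {x | ∃ n : ℕ, ε * n < birkhoffSum f (tailPart g M) n x}
  have hbound :
      Tendsto (fun M : ℕ => ENNReal.ofReal ((∫ x, tailPart g M x ∂μ) / ε)) atTop (𝓝 0) := by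
    simpa [Function.comp_def] using (ENNReal.continuous_ofReal.tendsto _).comp
      ((tendsto_integral_tailPart hgm hg).div_const ε)
  have hbad : μ bad = 0 := le_zero_iff.1 (ge_of_tendsto' hbound fun M =>
    (measure_mono (Set.iInter_subset _ M)).trans
      (measure_exists_birkhoffSum_gt_le hf (measurable_tailPart hgm M)
        (integrable_tailPart hgm hg M) (ae_of_all _ fun _ => tailPart_nonneg M.cast_nonneg) hε))
  filter_upwards [measure_eq_zero_iff_ae_notMem.1 hbad] with x hx
  simpa [bad] using hx

lemma ae_forall_exists_birkhoffSum_tailPart_le (hf : MeasurePreserving f μ μ)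
    (hgm : Measurable g) (hg : Integrable g μ) :
    ∀ᵐ x ∂μ, ∀ ε > 0, ∃ t, 0 ≤ t ∧ ∀ n, birkhoffSum f (tailPart g t) n x ≤ ε * n := by
  have hall := ae_all_iff.2 fun j : ℕ =>
    ae_exists_birkhoffSum_tailPart_le hf hgm hg (ε := 1 / (j + 1)) (by positivity)
  filter_upwards [hall] with x hx ε hε
  obtain ⟨j, hj⟩ := exists_nat_one_div_lt hε
  obtain ⟨M, hM⟩ := hx j
  exact ⟨M, M.cast_nonneg, fun n => (hM n).trans (by gcongr)⟩

end SmallTails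

lemma tendsto_birkhoffSum_tailPart_div {α : Type*} {f : α → α} {g : α → ℝ} {x : α}
    {Λ : ℕ → ℝ} (hΛ : Tendsto Λ atTop atTop)
    (h : ∀ ε > 0, ∃ t, 0 ≤ t ∧ ∀ n, birkhoffSum f (tailPart g t) n x ≤ ε * n) :
    Tendsto (fun N : ℕ => (1 / (N : ℝ)) * birkhoffSum f (tailPart g (Λ N)) N x) atTop (𝓝 0) := by
  refine tendsto_order.2 ⟨fun a ha => ?_, fun a ha => ?_⟩
  · filter_upwards [hΛ.eventually_ge_atTop 0] with N hN
    exact ha.trans_le (mul_nonneg (by positivity)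
      (Finset.sum_nonneg fun n _ => tailPart_nonneg hN))
  · obtain ⟨t, ht, hsmall⟩ := h (a / 2) (half_pos ha)
    filter_upwards [hΛ.eventually_ge_atTop t, eventually_gt_atTop 0] with N hN hN0
    have hsum : birkhoffSum f (tailPart g (Λ N)) N x ≤ a / 2 * N :=
      (Finset.sum_le_sum fun n _ => tailPart_le_tailPart ht hN).trans (hsmall N)
    calc (1 / (N : ℝ)) * birkhoffSum f (tailPart g (Λ N)) N x
        ≤ (1 / (N : ℝ)) * (a / 2 * N) := by gcongr
      _ = a / 2 := by field_simp
      _ < a := half_lt_self ha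

theorem stmt0_general {Ω : Type*} [MeasurableSpace Ω] (ℙ : Measure Ω) [IsProbabilityMeasure ℙ]
    (σ : Ω → Ω) (hσ : Ergodic σ ℙ)
    (φ : Ω → ℝ) (hφ : Integrable φ ℙ)
    (Λ : ℕ → ℝ) (hΛ : Tendsto Λ atTop atTop) :
    ∀ᵐ ω ∂ℙ, Tendsto (fun N : ℕ =>
        (1 / (N : ℝ)) * ∑ n ∈ Finset.range N,
          (if Λ N < φ (σ^[n] ω) then φ (σ^[n] ω) else 0))
      atTop (𝓝 0) := by
  have hmp := hσ.toMeasurePreserving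
  have horbit : ∀ᵐ ω ∂ℙ, ∀ n, φ (σ^[n] ω) = hφ.1.mk φ (σ^[n] ω) := ae_all_iff.2 fun n =>
    (hmp.iterate n).quasiMeasurePreserving.ae_eq_comp hφ.1.ae_eq_mk
  filter_upwards [horbit, ae_forall_exists_birkhoffSum_tailPart_le hmp hφ.1.measurable_mk
    (hφ.congr hφ.1.ae_eq_mk)] with ω hω hsmall
  simp only [hω]
  exact tendsto_birkhoffSum_tailPart_div hΛ hsmall

/-- For an ergodic measure-preserving `σ`, a nonnegative integrable `φ` and thresholds
`Λ N → ∞`, the truncated Birkhoff averages of the part of `φ` above `Λ N` tend to `0`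
almost surely. -/
theorem stmt0 {Ω : Type*} [MeasurableSpace Ω] (ℙ : Measure Ω) [IsProbabilityMeasure ℙ]
    (σ : Ω → Ω) (hσ : Ergodic σ ℙ)
    (φ : Ω → ℝ) (hφ0 : ∀ ω, 0 ≤ φ ω) (hφ : Integrable φ ℙ)
    (Λ : ℕ → ℝ) (hΛpos : ∀ N, 0 < Λ N) (hΛ : Tendsto Λ atTop atTop) :
    ∀ᵐ ω ∂ℙ, Tendsto (fun N : ℕ =>
        (1 / (N : ℝ)) * ∑ n ∈ Finset.range N,
          (if Λ N < φ (σ^[n] ω) then φ (σ^[n] ω) else 0))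
      atTop (𝓝 0) :=
  stmt0_general ℙ σ hσ φ hφ Λ hΛ
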